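/- Let f ∈ ℤ[x] be monic, quadratic, and irreducible over ℚ; let γ ∈ ℚ be its critical point and set m = f(γ) − γ, so that f = (x − γ)² + γ + m. Assume either |m| > 6 + 3·√(|γ| + 1), or γ ∈ ℤ and |m| > 1 + √(|γ| + 1). Assume furthermore that for every rational number s with s² = f²(γ), neither (−m + s)/2 nor (−m − s)/2 is the square of a nonzero rational number. Then f is stable, i.e. f^n is irreducible over ℚ for every n ≥ 1. -/

import Mathlib

/-!
Write `f = (x - γ)² + γ + m` and `σ(x) = 2γ - x`, so that `f ∘ σ = f`. Let `g` be irreducible of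
even degree with `g ∘ f` reducible, and let `A` be a monic irreducible factor of `g ∘ f`. A
`σ`-invariant polynomial is a polynomial `G ∘ f`, and `G ∘ f ∣ g ∘ f` forces `G ∣ g`; so `A` is
not `σ`-invariant. As `g` has no root, `A(γ) ≠ 0`, which also rules out `A ∘ σ = -A`. Hence `A`
and `A ∘ σ` are coprime, and their `σ`-invariant product is all of `g ∘ f`; in particular
`(g ∘ f)(γ) = A(γ)²`.

With `g = f^n` this makes `f^(n+1)(γ)` a square. For `n ≥ 2` this is impossible by size:
`f^(k+1)(γ) = y_k² + f(γ)` where `y_0 = 0`, `y_(k+1) = y_k² + m`, and `|y_k|` grows so fast that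
`T² - y_k² = f(γ)` has no solution: in `ℤ` if `γ ∈ ℤ`, and if `γ ∈ 1/2 + ℤ` after clearing the
power-of-four denominators of the `y_k`, whose numerators are odd, so that `T ± y_k` are both even.
For `n = 1`, comparing `A · (A ∘ σ)` with `f²` at `γ` and `γ + 1` shows that `(-m + A(γ)) / 2` is
a nonzero square while `A(γ)² = f²(γ)`.
-/

open Polynomial

/-- The `n`-th iterate of a polynomial, with `f^0 = X`. -/
noncomputable def polyIter {R : Type*} [CommRing R] (f : Polynomial R) : ℕ → Polynomial R
  | 0 => X
  | n + 1 => f.comp (polyIter f n)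

section polyIter

variable {R : Type*} [CommRing R]

theorem polyIter_one (f : R[X]) : polyIter f 1 = f := comp_X

theorem polyIter_succ' (f : R[X]) (n : ℕ) : polyIter f (n + 1) = (polyIter f n).comp f := by
  induction n with
  | zero => simp [polyIter]
  | succ n ih =>
    change f.comp (polyIter f (n + 1)) = (f.comp (polyIter f n)).comp f
    rw [ih, comp_assoc]

theorem map_polyIter {S : Type*} [CommRing S] (φ : R →+* S) (f : R[X]) (n : ℕ) :
    (polyIter f n).map φ = polyIter (f.map φ) n := by
  induction n with
  | zero => simp [polyIter]
  | succ n ih => simp [polyIter, map_comp, ih]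

theorem eval_polyIter (f : R[X]) (n : ℕ) (x : R) :
    eval x (polyIter f n) = (fun y ↦ eval y f)^[n] x := by
  induction n with
  | zero => simp [polyIter]
  | succ n ih => rw [polyIter, eval_comp, ih, Function.iterate_succ_apply']

theorem natDegree_polyIter [IsDomain R] (f : R[X]) (n : ℕ) :
    (polyIter f n).natDegree = f.natDegree ^ n := by
  induction n with
  | zero => simp [polyIter]
  | succ n ih => rw [polyIter_succ', natDegree_comp, ih, pow_succ]

theorem monic_polyIter {f : R[X]} (hf : f.Monic) (hdeg : f.natDegree ≠ 0) (n : ℕ) :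
    (polyIter f n).Monic := by
  induction n with
  | zero => exact monic_X
  | succ n ih => rw [polyIter_succ']; exact ih.comp hf hdeg

end polyIter

theorem eq_zero_of_eq_neg {R : Type*} [Ring R] [NoZeroDivisors R] [NeZero (2 : R)] {a : R}
    (h : a = -a) : a = 0 :=
  (mul_eq_zero.mp (by rw [two_mul]; nth_rw 1 [h]; exact neg_add_cancel a)).resolve_left
    two_ne_zero

namespace Polynomial

variable {K : Type*} [Field K]

theorem Monic.eq_X_sq_add_C_mul_X_add_C {A : K[X]} (hA : A.Monic) (h2 : A.natDegree = 2) :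
    A = X ^ 2 + C (A.coeff 1) * X + C (A.coeff 0) := by
  conv_lhs => rw [A.as_sum_range_C_mul_X_pow, h2]
  have hlc : A.coeff 2 = 1 := h2 ▸ hA.coeff_natDegree
  simp only [Finset.sum_range_succ, Finset.range_one, Finset.sum_singleton, pow_zero, mul_one,
    pow_one, hlc, map_one, one_mul]
  ring

theorem Monic.eq_sq_add_C {A : K[X]} {γ : K} (hA : A.Monic) (h2 : A.natDegree = 2)
    (hγ : A.coeff 1 = -2 * γ) : A = (X - C γ) ^ 2 + C (eval γ A) := by
  obtain ⟨a₁, a₀, rfl⟩ : ∃ a₁ a₀ : K, A = X ^ 2 + C a₁ * X + C a₀ :=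
    ⟨_, _, hA.eq_X_sq_add_C_mul_X_add_C h2⟩
  simp only [coeff_add, coeff_X_pow, coeff_C_mul_X, coeff_C] at hγ
  norm_num at hγ
  subst hγ
  simp only [eval_add, eval_pow, eval_mul, eval_C, eval_X]
  simp only [map_add, map_mul, map_pow, map_neg, map_ofNat]
  ring

theorem natDegree_sq_add_C (γ c : K) : ((X - C γ) ^ 2 + C c).natDegree = 2 := by
  rw [natDegree_add_C, natDegree_pow, natDegree_X_sub_C]

theorem monic_sq_add_C (γ c : K) : ((X - C γ) ^ 2 + C c).Monic := by
  monicity!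

theorem eval_comp_sq_add_C_ne_zero {g : K[X]} (γ c : K) (hg : Irreducible g)
    (hg1 : g.natDegree ≠ 1) : eval γ (g.comp ((X - C γ) ^ 2 + C c)) ≠ 0 := by
  intro h
  simp only [eval_comp, eval_add, eval_pow, eval_sub, eval_X, eval_C, sub_self] at h
  exact hg1 (natDegree_eq_of_degree_eq_some
    (degree_eq_one_of_irreducible_of_root hg (x := c) (by simpa using h)))

theorem eq_zero_of_comp_eq_zero {p q : K[X]} (hq : q.natDegree ≠ 0) (h : p.comp q = 0) :
    p = 0 :=
  (comp_eq_zero_iff.mp h).resolve_right fun h' ↦ hq (by rw [h'.2, natDegree_C])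

theorem dvd_of_comp_dvd_comp {G g q : K[X]} (hq : q.natDegree ≠ 0) (h : G.comp q ∣ g.comp q) :
    G ∣ g := by
  rcases eq_or_ne G 0 with rfl | hG
  · rw [zero_comp, zero_dvd_iff] at h
    rw [eq_zero_of_comp_eq_zero hq h]
  rw [← EuclideanDomain.mod_eq_zero]
  by_contra hr
  have hdvd : G.comp q ∣ (g % G).comp q := by
    have hsplit := congrArg (·.comp q) (EuclideanDomain.div_add_mod g G)
    simp only [add_comp, mul_comp] at hsplit
    exact (dvd_add_right (dvd_mul_right _ _)).mp (hsplit ▸ h)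
  have hlt : ((g % G).comp q).natDegree < (G.comp q).natDegree := by
    rw [natDegree_comp, natDegree_comp]
    exact Nat.mul_lt_mul_of_pos_right (natDegree_lt_natDegree hr (degree_mod_lt g hG))
      (Nat.pos_of_ne_zero hq)
  exact hr (eq_zero_of_comp_eq_zero hq (eq_zero_of_dvd_of_natDegree_lt hdvd hlt))

theorem expand_contract_two_of_comp_neg_X_eq [NeZero (2 : K)] {P : K[X]}
    (h : P.comp (-X) = P) : expand K 2 (contract 2 P) = P := by
  ext n
  rw [coeff_expand two_pos, coeff_contract two_ne_zero]
  split_ifs with hn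
  · rw [Nat.div_mul_cancel hn]
  · have hcoeff := congrArg (coeff · n) h
    rw [← neg_one_mul (X : K[X]), ← C_1, ← C_neg, comp_C_mul_X_coeff,
      (Nat.odd_iff.mpr (Nat.two_dvd_ne_zero.mp hn)).neg_one_pow, mul_neg_one] at hcoeff
    exact (eq_zero_of_eq_neg hcoeff.symm).symm

noncomputable def reflection (γ : K) : K[X] := C (2 * γ) - X

section reflection

variable (γ : K)

theorem reflection_eq_neg : reflection γ = -(X - C (2 * γ)) := by
  rw [reflection]; ring

@[simp] theorem natDegree_reflection : (reflection γ).natDegree = 1 := by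
  rw [reflection_eq_neg, natDegree_neg, natDegree_X_sub_C]

@[simp] theorem leadingCoeff_reflection : (reflection γ).leadingCoeff = -1 := by
  rw [reflection_eq_neg, leadingCoeff_neg, leadingCoeff_X_sub_C]

theorem eval_comp_reflection (p : K[X]) (x : K) :
    eval x (p.comp (reflection γ)) = eval (2 * γ - x) p := by
  simp [reflection]

theorem reflection_comp_reflection : (reflection γ).comp (reflection γ) = X := by
  simp only [reflection, sub_comp, C_comp, X_comp]; ring

@[simp] theorem comp_reflection_comp_reflection (p : K[X]) :
    (p.comp (reflection γ)).comp (reflection γ) = p := by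
  rw [comp_assoc, reflection_comp_reflection, comp_X]

@[simp] theorem natDegree_comp_reflection (p : K[X]) :
    (p.comp (reflection γ)).natDegree = p.natDegree := by
  rw [natDegree_comp, natDegree_reflection, mul_one]

theorem leadingCoeff_comp_reflection (p : K[X]) :
    (p.comp (reflection γ)).leadingCoeff = (-1) ^ p.natDegree * p.leadingCoeff := by
  rw [leadingCoeff_comp (by simp), leadingCoeff_reflection, mul_comm]

theorem sq_add_C_comp_reflection (c : K) :
    ((X - C γ) ^ 2 + C c).comp (reflection γ) = (X - C γ) ^ 2 + C c := by
  simp only [reflection, add_comp, pow_comp, sub_comp, X_comp, C_comp, C_mul, map_ofNat]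
  ring

theorem irreducible_comp_reflection {p : K[X]} (hp : Irreducible p) :
    Irreducible (p.comp (reflection γ)) := by
  simpa [comp_eq_aeval] using hp.map (algEquivOfCompEqX _ _
    (reflection_comp_reflection γ) (reflection_comp_reflection γ))

end reflection

section NeZeroTwo

variable [NeZero (2 : K)] {γ : K}

theorem exists_eq_comp_of_comp_reflection_eq {p : K[X]} (c : K)
    (h : p.comp (reflection γ) = p) : ∃ G : K[X], p = G.comp ((X - C γ) ^ 2 + C c) := by
  -- translated to the origin, `p` becomes even, hence a polynomial in `X ^ 2`
  have hP : (p.comp (X + C γ)).comp (-X) = p.comp (X + C γ) := by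
    have hrefl : (reflection γ).comp (-X + C γ) = X + C γ := by
      rw [reflection, sub_comp, C_comp, X_comp, C_mul, map_ofNat]; ring
    rw [comp_assoc, add_comp, X_comp, C_comp, ← hrefl, ← comp_assoc, h]
  refine ⟨(contract 2 (p.comp (X + C γ))).comp (X - C c), ?_⟩
  rw [comp_assoc, sub_comp, X_comp, C_comp, add_sub_cancel_right,
    show (X - C γ) ^ 2 = (X ^ 2 : K[X]).comp (X - C γ) by simp, ← comp_assoc,
    ← expand_eq_comp_X_pow, expand_contract_two_of_comp_neg_X_eq hP, comp_assoc]
  simp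

variable {c : K} {g : K[X]}

theorem comp_dvd_of_comp_reflection_eq (hg : Irreducible g) {p : K[X]}
    (hp : p.comp (reflection γ) = p) (hpu : ¬IsUnit p)
    (hdvd : p ∣ g.comp ((X - C γ) ^ 2 + C c)) : g.comp ((X - C γ) ^ 2 + C c) ∣ p := by
  obtain ⟨G, rfl⟩ := exists_eq_comp_of_comp_reflection_eq c hp
  have hGu : ¬IsUnit G := fun hG ↦ by
    obtain ⟨a, ha, rfl⟩ := Polynomial.isUnit_iff.mp hG
    exact hpu (by rw [C_comp]; exact isUnit_C.mpr ha)
  obtain ⟨t, ht⟩ := dvd_of_comp_dvd_comp (by rw [natDegree_sq_add_C]; norm_num) hdvd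
  obtain ⟨s, hs⟩ : g ∣ G :=
    (Associated.symm ⟨((hg.isUnit_or_isUnit ht).resolve_left hGu).unit, ht.symm⟩).dvd
  exact ⟨s.comp _, by rw [hs, mul_comp]⟩

theorem comp_reflection_eq_of_associated {A : K[X]} (hA : A.Monic) (hγ : eval γ A ≠ 0)
    (h : Associated A (A.comp (reflection γ))) : A.comp (reflection γ) = A := by
  obtain ⟨u, hu⟩ := h
  obtain ⟨a, -, ha⟩ := Polynomial.isUnit_iff.mp u.isUnit
  have hlc := congrArg leadingCoeff hu
  rw [← ha, leadingCoeff_mul, leadingCoeff_C, hA.leadingCoeff, one_mul,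
    leadingCoeff_comp_reflection, hA.leadingCoeff, mul_one] at hlc
  rw [← hu, ← ha, hlc]
  rcases neg_one_pow_eq_or K A.natDegree with h1 | h1
  · rw [h1, C_1, mul_one]
  · refine absurd (eq_zero_of_eq_neg ?_) hγ
    have := congrArg (eval γ) hu
    rw [← ha, hlc, h1, eval_comp_reflection, two_mul, add_sub_cancel_right, eval_mul] at this
    simpa using this.symm

theorem exists_monic_mul_comp_reflection_eq (hgm : g.Monic) (hg : Irreducible g)
    (heven : Even g.natDegree) (hred : ¬Irreducible (g.comp ((X - C γ) ^ 2 + C c))) :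
    ∃ A : K[X], A.Monic ∧ A.natDegree = g.natDegree ∧ A.comp (reflection γ) ≠ A ∧
      A * A.comp (reflection γ) = g.comp ((X - C γ) ^ 2 + C c) := by
  set H := g.comp ((X - C γ) ^ 2 + C c)
  have hHm : H.Monic := hgm.comp (monic_sq_add_C γ c) (by rw [natDegree_sq_add_C]; norm_num)
  have hHdeg : H.natDegree = g.natDegree * 2 := by rw [natDegree_comp, natDegree_sq_add_C]
  have hg1 : g.natDegree ≠ 1 := fun h ↦ Nat.not_even_one (h ▸ heven)
  obtain ⟨A, hAm, hA, hAH⟩ := exists_monic_irreducible_factor H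
    (not_isUnit_of_natDegree_pos _ (by have := hg.natDegree_pos; omega))
  set B := A.comp (reflection γ)
  have hBH : B ∣ H := by
    obtain ⟨s, hs⟩ := hAH
    refine ⟨s.comp (reflection γ), ?_⟩
    rw [← mul_comp, ← hs, comp_assoc, sq_add_C_comp_reflection]
  have hAγ : eval γ A ≠ 0 := fun h ↦
    eval_comp_sq_add_C_ne_zero γ c hg hg1 (zero_dvd_iff.mp (h ▸ eval_dvd hAH))
  have hBA : B ≠ A := fun hBA ↦
    hred ((associated_of_dvd_dvd hAH
      (comp_dvd_of_comp_reflection_eq hg hBA hA.not_isUnit hAH)).irreducible hA)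
  have hcop : IsCoprime A B := hA.coprime_iff_not_dvd.mpr fun hdvd ↦
    hBA (comp_reflection_eq_of_associated hAm hAγ
      (hA.associated_of_dvd (irreducible_comp_reflection γ hA) hdvd))
  have hHAB : Associated H (A * B) := associated_of_dvd_dvd
    (comp_dvd_of_comp_reflection_eq hg (by simp [B, mul_comm])
      (fun h ↦ hA.not_isUnit (isUnit_of_mul_isUnit_left h)) (hcop.mul_dvd hAH hBH))
    (hcop.mul_dvd hAH hBH)
  have hdeg : A.natDegree = g.natDegree := by
    have := natDegree_eq_of_degree_eq (degree_eq_degree_of_associated hHAB)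
    rw [natDegree_mul hAm.ne_zero (irreducible_comp_reflection γ hA).ne_zero,
      natDegree_comp_reflection] at this
    omega
  have hBm : B.Monic := by
    rw [Monic, leadingCoeff_comp_reflection, hAm.leadingCoeff, hdeg, heven.neg_one_pow, one_mul]
  exact ⟨A, hAm, hdeg, hBA, (eq_of_monic_of_associated hHm (hAm.mul hBm) hHAB).symm⟩

theorem exists_sq_eq_of_mul_comp_reflection_eq {m : K} {A : K[X]} (hA : A.Monic)
    (hA2 : A.natDegree = 2) (hne : A.comp (reflection γ) ≠ A)
    (h : A * A.comp (reflection γ) = ((X - C γ) ^ 2 + C m) ^ 2 + C c) :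
    ∃ r s : K, r ≠ 0 ∧ s ^ 2 = m ^ 2 + c ∧ r ^ 2 = (-m + s) / 2 := by
  have hval (x : K) : eval x A * eval (2 * γ - x) A = ((x - γ) ^ 2 + m) ^ 2 + c := by
    rw [← eval_comp_reflection, ← eval_mul, h]; simp
  obtain ⟨a₁, a₀, rfl⟩ : ∃ a₁ a₀ : K, A = X ^ 2 + C a₁ * X + C a₀ :=
    ⟨_, _, hA.eq_X_sq_add_C_mul_X_add_C hA2⟩
  have hw : 2 * γ + a₁ ≠ 0 := fun hw ↦ hne (by
    simp only [reflection, add_comp, mul_comp, pow_comp, X_comp, C_comp]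
    rw [show a₁ = -2 * γ by linear_combination hw]
    simp only [C_mul, C_neg, map_ofNat]
    ring)
  have h0 := hval γ
  have h1 := hval (γ + 1)
  simp only [eval_add, eval_pow, eval_mul, eval_C, eval_X] at h0 h1
  refine ⟨(2 * γ + a₁) / 2, γ ^ 2 + a₁ * γ + a₀, div_ne_zero hw two_ne_zero, ?_, ?_⟩
  · linear_combination h0
  · field_simp
    linear_combination h0 - h1

theorem irreducible_polyIter_two {m : K} (hirr : Irreducible ((X - C γ) ^ 2 + C (γ + m)))
    (h : ∀ s : K, s ^ 2 = eval γ (polyIter ((X - C γ) ^ 2 + C (γ + m)) 2) →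
      ¬∃ r : K, r ≠ 0 ∧ r ^ 2 = (-m + s) / 2) :
    Irreducible (polyIter ((X - C γ) ^ 2 + C (γ + m)) 2) := by
  have hcomp : ((X - C γ) ^ 2 + C (γ + m)).comp ((X - C γ) ^ 2 + C (γ + m))
      = ((X - C γ) ^ 2 + C m) ^ 2 + C (γ + m) := by
    simp only [add_comp, pow_comp, sub_comp, X_comp, C_comp, C_add]
    ring
  rw [polyIter_succ', polyIter_one] at h ⊢
  by_contra hred
  obtain ⟨A, hAm, hAdeg, hAne, hAH⟩ := exists_monic_mul_comp_reflection_eq (monic_sq_add_C γ _)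
    hirr (by rw [natDegree_sq_add_C]; exact even_two) hred
  obtain ⟨r, s, hr, hs, hrs⟩ := exists_sq_eq_of_mul_comp_reflection_eq hAm
    (hAdeg.trans (natDegree_sq_add_C γ _)) hAne (hAH.trans hcomp)
  exact h s (by rw [hcomp, hs]; simp) ⟨r, hr, hrs⟩

theorem irreducible_polyIter_of_not_isSquare
    (h2 : Irreducible (polyIter ((X - C γ) ^ 2 + C c) 2))
    (hsq : ∀ n, 3 ≤ n → ¬IsSquare (eval γ (polyIter ((X - C γ) ^ 2 + C c) n)))
    {n : ℕ} (hn : 2 ≤ n) : Irreducible (polyIter ((X - C γ) ^ 2 + C c) n) := by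
  induction n, hn using Nat.le_induction with
  | base => exact h2
  | succ n hn ih =>
    by_contra hred
    rw [polyIter_succ'] at hred
    have heven : Even (polyIter ((X - C γ) ^ 2 + C c) n).natDegree := by
      rw [natDegree_polyIter, natDegree_sq_add_C]; exact (Nat.even_pow' (by omega)).mpr even_two
    obtain ⟨A, -, -, -, hAH⟩ := exists_monic_mul_comp_reflection_eq
      (monic_polyIter (monic_sq_add_C γ c) (by rw [natDegree_sq_add_C]; norm_num) n) ih heven hred
    refine hsq (n + 1) (by omega) ⟨eval γ A, ?_⟩
    rw [polyIter_succ', ← hAH, eval_mul, eval_comp_reflection, two_mul, add_sub_cancel_right]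

end NeZeroTwo

end Polynomial

section Orbit

variable {R : Type*} [CommRing R]

theorem iterate_sub_center (γ m x : R) (k : ℕ) :
    (fun x ↦ (x - γ) ^ 2 + (γ + m))^[k] x - γ = (fun y ↦ y ^ 2 + m)^[k] (x - γ) :=
  Function.Semiconj.iterate_right (f := (· - γ)) (fun x ↦ by ring) k x

theorem iterate_succ_center (γ m : R) (k : ℕ) :
    (fun x ↦ (x - γ) ^ 2 + (γ + m))^[k + 1] γ =
      ((fun y ↦ y ^ 2 + m)^[k] 0) ^ 2 + (γ + m) := by
  rw [Function.iterate_succ_apply', ← sub_self γ, ← iterate_sub_center]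

theorem iterate_two_zero (m : R) : (fun y ↦ y ^ 2 + m)^[2] 0 = m ^ 2 + m := by
  simp [Function.iterate_succ_apply']

theorem intCast_iterate (m : ℤ) (k : ℕ) :
    (((fun y ↦ y ^ 2 + m)^[k] 0 : ℤ) : R) = (fun y : R ↦ y ^ 2 + m)^[k] 0 := by
  rw [← Int.cast_zero (R := R)]
  exact Function.Semiconj.iterate_right (f := ((↑) : ℤ → R)) (gb := fun y : R ↦ y ^ 2 + m)
    (fun y ↦ by push_cast; rfl) k 0

end Orbit

section Growth

variable {R : Type*} [CommRing R] [LinearOrder R] [IsStrictOrderedRing R]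

theorem sq_sub_abs_le_abs_sq_add (y m : R) : y ^ 2 - |m| ≤ |y ^ 2 + m| := by
  linarith [neg_abs_le m, le_abs_self (y ^ 2 + m)]

theorem abs_add_abs_lt_abs_iterate {γ m : R} (hm : 2 < |m|) (h : |γ| + 1 < (|m| - 1) ^ 2)
    (j : ℕ) : |m| + |γ| < |(fun y ↦ y ^ 2 + m)^[j + 2] 0| := by
  induction j with
  | zero =>
    rw [zero_add, iterate_two_zero]
    nlinarith [sq_abs m, sq_sub_abs_le_abs_sq_add m m]
  | succ j ih =>
    rw [Function.iterate_succ_apply']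
    set y := (fun y ↦ y ^ 2 + m)^[j + 2] 0
    nlinarith [sq_abs y, abs_nonneg γ, sq_sub_abs_le_abs_sq_add y m]

theorem mul_four_pow_lt_abs_iterate {γ m : R} (h : 9 * |m| + 8 * |γ| < m ^ 2) (j : ℕ) :
    (|m| + |γ|) * 4 ^ 2 ^ (j + 1) < 2 * |(fun y ↦ y ^ 2 + m)^[j + 2] 0| := by
  have hm : 9 < |m| := by nlinarith [sq_abs m, abs_nonneg γ, abs_nonneg m]
  induction j with
  | zero =>
    rw [zero_add, iterate_two_zero]
    norm_num
    nlinarith [sq_abs m, sq_sub_abs_le_abs_sq_add m m]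
  | succ j ih =>
    rw [Function.iterate_succ_apply', pow_succ 2 (j + 1), pow_mul]
    set y := (fun y ↦ y ^ 2 + m)^[j + 2] 0
    set D : R := 4 ^ 2 ^ (j + 1)
    set W := |m| + |γ|
    have hD : 1 ≤ D := one_le_pow₀ (by norm_num)
    have hW : 9 < W := by linarith [abs_nonneg γ]
    have hsq : (W * D) ^ 2 < (2 * |y|) ^ 2 := pow_lt_pow_left₀ ih (by positivity) two_ne_zero
    nlinarith [sq_abs y, sq_sub_abs_le_abs_sq_add y m, abs_nonneg γ,
      mul_nonneg (mul_nonneg (by positivity : (0 : R) ≤ W) (by linarith : (0 : R) ≤ W - 2))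
        (by nlinarith : (0 : R) ≤ D ^ 2 - 1)]

end Growth

namespace Int

theorem two_mul_abs_le_abs_sub_add_abs_add (T V : ℤ) : 2 * |V| ≤ |T - V| + |T + V| := by
  calc 2 * |V| = |(T + V) - (T - V)| := by rw [← abs_two, ← abs_mul]; ring_nf
    _ ≤ |T + V| + |T - V| := abs_sub _ _
    _ = |T - V| + |T + V| := add_comm _ _

theorem abs_le_abs_of_isSquare_sq_add {V N : ℤ} (hN : N ≠ 0) (h : IsSquare (V ^ 2 + N)) :
    |V| ≤ |N| := by
  obtain ⟨T, hT⟩ := h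
  have hN' : |T - V| * |T + V| = |N| := by rw [← abs_mul]; congr 1; linear_combination -hT
  have hN0 : |T - V| * |T + V| ≠ 0 := by rw [hN']; exact abs_ne_zero.mpr hN
  have h1 := one_le_abs (abs_ne_zero.mp (left_ne_zero_of_mul hN0))
  have h2 := one_le_abs (abs_ne_zero.mp (right_ne_zero_of_mul hN0))
  nlinarith [two_mul_abs_le_abs_sub_add_abs_add T V]

theorem two_mul_abs_le_abs_of_isSquare_sq_add {V N : ℤ} (hV : Odd V) (hN : Even N) (hN0 : N ≠ 0)
    (h : IsSquare (V ^ 2 + N)) : 2 * |V| ≤ |N| := by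
  obtain ⟨T, hT⟩ := h
  have hTodd : Odd T := (Int.odd_mul.mp (hT ▸ hV.pow.add_even hN)).1
  have hN' : |T - V| * |T + V| = |N| := by rw [← abs_mul]; congr 1; linear_combination -hT
  have two_le {a : ℤ} (ha : Even a) (ha0 : |a| ≠ 0) : 2 ≤ |a| :=
    Int.le_of_dvd (abs_pos.mpr (abs_ne_zero.mp ha0)) ((dvd_abs _ _).mpr ha.two_dvd)
  have hN0' : |T - V| * |T + V| ≠ 0 := by rw [hN']; exact abs_ne_zero.mpr hN0
  have h1 := two_le (hTodd.sub_odd hV) (left_ne_zero_of_mul hN0')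
  have h2 := two_le (hTodd.add_odd hV) (right_ne_zero_of_mul hN0')
  linarith [two_mul_abs_le_abs_sub_add_abs_add T V, add_le_mul h1 h2]

end Int

theorem not_isSquare_iterate_of_int {z M : ℤ} (hc : z + M ≠ 0) (hM : 2 < |M|)
    (h : |z| + 1 < (|M| - 1) ^ 2) (k : ℕ) :
    ¬IsSquare ((fun x : ℚ ↦ (x - z) ^ 2 + (z + M))^[k + 3] z) := by
  rw [iterate_succ_center, ← intCast_iterate]
  intro hsq
  have hle := Int.abs_le_abs_of_isSquare_sq_add hc
    (Rat.isSquare_intCast_iff.mp (by exact_mod_cast hsq))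
  linarith [abs_add_abs_lt_abs_iterate hM h k, abs_add_le z M]

theorem exists_odd_intCast_eq_iterate_mul {m : ℚ} {M : ℤ} (hM : Odd M) (hm : (M : ℚ) = 4 * m)
    (j : ℕ) : ∃ V : ℤ, Odd V ∧ (V : ℚ) = (fun y ↦ y ^ 2 + m)^[j + 1] 0 * 4 ^ 2 ^ j := by
  induction j with
  | zero => exact ⟨M, hM, by
    rw [hm]; simp only [zero_add, Function.iterate_one, zero_pow two_ne_zero, pow_zero, pow_one]
    ring⟩
  | succ j ih =>
    obtain ⟨V, hV, hVy⟩ := ih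
    obtain ⟨E, hE⟩ : (16 : ℤ) ∣ (4 ^ 2 ^ j) ^ 2 :=
      pow_dvd_pow_of_dvd (dvd_pow_self 4 (by positivity)) 2
    refine ⟨V ^ 2 + M * (4 * E), hV.pow.add_even ⟨2 * M * E, by ring⟩, ?_⟩
    have hEq : ((4 : ℚ) ^ 2 ^ j) ^ 2 = 16 * E := by exact_mod_cast hE
    rw [Function.iterate_succ_apply', pow_succ 2 j, pow_mul, hEq]
    push_cast
    linear_combination (V + (fun y ↦ y ^ 2 + m)^[j + 1] 0 * 4 ^ 2 ^ j) * hVy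
      + ((fun y ↦ y ^ 2 + m)^[j + 1] 0) ^ 2 * hEq + 4 * E * hm

theorem two_mul_abs_le_of_isSquare_sq_add {y c : ℚ} {V C D : ℤ} (hV : Odd V) (hC : Odd C)
    (hD : 4 ∣ D) (hy : (V : ℚ) = y * D) (hc : (C : ℚ) = 4 * c) (h : IsSquare (y ^ 2 + c)) :
    2 * |y| ≤ |c| * |(D : ℚ)| := by
  obtain ⟨e, rfl⟩ := hD
  obtain ⟨t, ht⟩ := h
  push_cast at hy ⊢
  have he : e ≠ 0 := by
    rintro rfl
    simp only [Int.cast_zero, mul_zero, Int.cast_eq_zero] at hy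
    exact Int.not_odd_zero (hy ▸ hV)
  have hC0 : C ≠ 0 := by rintro rfl; exact Int.not_odd_zero hC
  have hle := Int.two_mul_abs_le_abs_of_isSquare_sq_add (N := 4 * e ^ 2 * C) hV
    ⟨2 * e ^ 2 * C, by ring⟩ (mul_ne_zero (mul_ne_zero four_ne_zero (pow_ne_zero 2 he)) hC0)
    (Rat.isSquare_intCast_iff.mp
      ⟨t * (4 * e), by push_cast; rw [hy, hc]; linear_combination (4 * (e : ℚ)) ^ 2 * ht⟩)
  have hleQ : 2 * |(V : ℚ)| ≤ |(4 * e ^ 2 * C : ℚ)| := by exact_mod_cast hle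
  rw [hy, hc, show (4 : ℚ) * e ^ 2 * (4 * c) = (4 * e) ^ 2 * c by ring, abs_mul y,
    abs_mul _ c, abs_pow, sq] at hleQ
  nlinarith [(by positivity : 0 < |4 * (e : ℚ)|)]

theorem not_isSquare_iterate_of_odd {γ m : ℚ} {M C : ℤ} (hM : Odd M) (hC : Odd C)
    (hm : (M : ℚ) = 4 * m) (hc : (C : ℚ) = 4 * (γ + m)) (h : 9 * |m| + 8 * |γ| < m ^ 2)
    (k : ℕ) :
    ¬IsSquare ((fun x ↦ (x - γ) ^ 2 + (γ + m))^[k + 3] γ) := by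
  rw [iterate_succ_center]
  intro hsq
  obtain ⟨V, hV, hVy⟩ := exists_odd_intCast_eq_iterate_mul hM hm (k + 1)
  have hD : (0 : ℚ) < 4 ^ 2 ^ (k + 1) := by positivity
  have hle := two_mul_abs_le_of_isSquare_sq_add (D := 4 ^ 2 ^ (k + 1)) hV hC
    (dvd_pow_self 4 (by positivity)) (by rw [hVy]; push_cast; rfl) hc hsq
  push_cast at hle
  rw [abs_of_pos hD] at hle
  nlinarith [mul_four_pow_lt_abs_iterate h k, abs_add_le γ m]

theorem two_lt_and_lt_sq_of_one_add_sqrt_lt {x y : ℝ} (hx : 0 ≤ x) (h : 1 + √(x + 1) < y) :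
    2 < y ∧ x + 1 < (y - 1) ^ 2 := by
  have hs : 1 ≤ √(x + 1) := Real.one_le_sqrt.mpr (by linarith)
  refine ⟨by linarith, ?_⟩
  calc x + 1 = √(x + 1) ^ 2 := (Real.sq_sqrt (by linarith)).symm
    _ < (y - 1) ^ 2 := pow_lt_pow_left₀ (by linarith) (by positivity) two_ne_zero

theorem lt_sq_of_six_add_three_sqrt_lt {x y : ℝ} (hx : 0 ≤ x) (h : 6 + 3 * √(x + 1) < y) :
    9 * y + 8 * x < y ^ 2 := by
  have hs : 1 ≤ √(x + 1) := Real.one_le_sqrt.mpr (by linarith)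
  have hs2 : √(x + 1) ^ 2 = x + 1 := Real.sq_sqrt (by linarith)
  nlinarith [mul_nonneg (sub_nonneg.mpr hs) (by positivity : (0 : ℝ) ≤ √(x + 1) + 10)]

theorem not_isSquare_eval_polyIter {γ m : ℚ} {a b : ℤ} (ha : (a : ℚ) = 2 * γ)
    (hb : (b : ℚ) = γ ^ 2 + γ + m) (hc : γ + m ≠ 0)
    (hbound : ((|m| : ℚ) : ℝ) > 6 + 3 * Real.sqrt (|γ| + 1) ∨
      ((∃ z : ℤ, (z : ℚ) = γ) ∧ ((|m| : ℚ) : ℝ) > 1 + Real.sqrt (|γ| + 1)))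
    {n : ℕ} (hn : 3 ≤ n) : ¬IsSquare (eval γ (polyIter ((X - C γ) ^ 2 + C (γ + m)) n)) := by
  obtain ⟨k, rfl⟩ : ∃ k, n = k + 3 := ⟨n - 3, by omega⟩
  rw [eval_polyIter]
  simp only [eval_add, eval_pow, eval_sub, eval_X, eval_C]
  by_cases hint : ∃ z : ℤ, (z : ℚ) = γ
  · obtain ⟨z, rfl⟩ := hint
    obtain ⟨M, rfl⟩ : ∃ M : ℤ, (M : ℚ) = m := ⟨b - z ^ 2 - z, by push_cast; linarith⟩
    have hlt : 1 + √(|(z : ℝ)| + 1) < |(M : ℝ)| := by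
      rcases hbound with h | ⟨-, h⟩ <;> push_cast at h <;>
        linarith [Real.sqrt_nonneg (|(z : ℝ)| + 1)]
    obtain ⟨h2, hsq⟩ := two_lt_and_lt_sq_of_one_add_sqrt_lt (abs_nonneg _) hlt
    exact not_isSquare_iterate_of_int (by exact_mod_cast hc) (by exact_mod_cast h2)
      (by exact_mod_cast hsq) k
  · obtain ⟨l, rfl⟩ : Odd a := Int.not_even_iff_odd.mp fun ⟨l, hl⟩ ↦
      hint ⟨l, by push_cast [hl] at ha; linarith⟩
    have hlt : 6 + 3 * √(|(γ : ℝ)| + 1) < |(m : ℝ)| := by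
      simpa using hbound.resolve_right fun h ↦ hint h.1
    have h9 : 9 * |m| + 8 * |γ| < m ^ 2 := by
      have := lt_sq_of_six_add_three_sqrt_lt (abs_nonneg _) hlt
      rw [sq_abs] at this
      exact_mod_cast this
    push_cast at ha
    refine not_isSquare_iterate_of_odd (M := 4 * b - (2 * l + 1) ^ 2 - 2 * (2 * l + 1))
      (C := 4 * b - (2 * l + 1) ^ 2) ⟨2 * b - 2 * l ^ 2 - 4 * l - 2, by ring⟩
      ⟨2 * b - 2 * l ^ 2 - 2 * l - 1, by ring⟩ ?_ ?_ h9 k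
    · push_cast; rw [hb]; linear_combination -(2 * γ + (2 * l + 1) + 2) * ha
    · push_cast; rw [hb]; linear_combination -(2 * γ + (2 * l + 1)) * ha

theorem stable_of_large_m
    (f : Polynomial ℤ) (hf : f.Monic) (hdeg : f.natDegree = 2)
    (hirr : Irreducible (f.map (Int.castRingHom ℚ)))
    (γ m : ℚ) (hγ : γ = -(f.coeff 1 : ℚ) / 2)
    (hm : m = Polynomial.aeval γ f - γ)
    (hbound : ((|m| : ℚ) : ℝ) > 6 + 3 * Real.sqrt (|γ| + 1) ∨
      ((∃ z : ℤ, (z : ℚ) = γ) ∧ ((|m| : ℚ) : ℝ) > 1 + Real.sqrt (|γ| + 1)))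
    (hf2 : ∀ s : ℚ, s ^ 2 = (fun x : ℚ => Polynomial.aeval x f)^[2] γ →
      (¬∃ r : ℚ, r ≠ 0 ∧ r ^ 2 = (-m + s) / 2) ∧ (¬∃ r : ℚ, r ≠ 0 ∧ r ^ 2 = (-m - s) / 2)) :
    ∀ n : ℕ, 1 ≤ n → Irreducible ((polyIter f n).map (Int.castRingHom ℚ)) := by
  set q := f.map (Int.castRingHom ℚ)
  have hqm : q.Monic := hf.map _
  have haeval (x : ℚ) : aeval x f = eval x q := by rw [aeval_def, eval₂_eq_eval_map]; rfl
  have hq : q = (X - C γ) ^ 2 + C (γ + m) := by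
    rw [hqm.eq_sq_add_C (γ := γ) (by rw [hf.natDegree_map, hdeg]) (by simp [q, hγ]; ring),
      hm, haeval, add_sub_cancel]
  have hc : γ + m ≠ 0 := fun h ↦ by
    rw [hq, h, C_0, add_zero] at hirr
    exact not_irreducible_pow (by norm_num) hirr
  have hb : (f.coeff 0 : ℚ) = γ ^ 2 + γ + m := by
    have h0 := congrArg (eval 0) hq
    rw [← coeff_zero_eq_eval_zero, coeff_map] at h0
    simp only [eq_intCast, map_add, eval_add, eval_pow, eval_sub, eval_X, eval_C, zero_sub,
      even_two.neg_pow] at h0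
    linear_combination h0
  rintro (_ | _ | n) hn
  · omega
  · rwa [map_polyIter, polyIter_one]
  rw [map_polyIter]
  change Irreducible (polyIter q _)
  rw [hq]
  have h2 := irreducible_polyIter_two (hq ▸ hirr) fun s hs ↦
    (hf2 s (by rw [hs, eval_polyIter, funext haeval, hq])).1
  exact irreducible_polyIter_of_not_isSquare h2 (fun n hn ↦ not_isSquare_eval_polyIter
    (a := -f.coeff 1) (by push_cast; rw [hγ]; ring) hb hc hbound hn) (by omega)
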